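/- arXiv:2102.13553 — 6 statements merged into one kernel-verified Lean document; each statement's English description precedes it below -/
import Mathlib

section
/- The function Z(r) = log(2θ²γ r^(θ-2) / (γ + r^θ)²), where θ > 2 and γ = ((θ+2)/(θ-2)) · ((θ²-4)/2)^(θ/2), satisfies the radial singular Liouville equation -(r Z'(r))' = r e^{Z(r)} for all r > 0. -/
open Real

/-- The radial bubble `Z(r) = log(2θ²γ r^(θ-2)/(γ + r^θ)²)` solves the radial singular
Liouville equation `-(r Z')' = r e^Z` for all `r > 0`. -/
theorem stmt0 (θ : ℝ) (hθ : 2 < θ)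
    (γ : ℝ) (hγ : γ = (θ + 2) / (θ - 2) * ((θ ^ 2 - 4) / 2) ^ (θ / 2))
    (Z : ℝ → ℝ)
    (hZ : ∀ r : ℝ, 0 < r →
      Z r = Real.log (2 * θ ^ 2 * γ * r ^ (θ - 2) / (γ + r ^ θ) ^ 2)) :
    ∀ r : ℝ, 0 < r →
      -(deriv (fun s : ℝ => s * deriv Z s) r) = r * Real.exp (Z r) := by
  have h2 : (0:ℝ) < θ - 2 := by linarith
  have hγ0 : 0 < γ := by
    rw [hγ]
    exact mul_pos (div_pos (by linarith) h2) (Real.rpow_pos_of_pos (by nlinarith) _)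
  have hden : ∀ s : ℝ, 0 < s → 0 < γ + s ^ θ := fun s hs =>
    add_pos hγ0 (Real.rpow_pos_of_pos hs θ)
  have hnum : ∀ s : ℝ, 0 < s → 0 < 2 * θ ^ 2 * γ * s ^ (θ - 2) / (γ + s ^ θ) ^ 2 := by
    intro s hs
    have := Real.rpow_pos_of_pos hs (θ - 2)
    have := hden s hs
    positivity
  have hpow : ∀ s : ℝ, 0 < s → HasDerivAt (fun x : ℝ => x ^ θ) (θ * s ^ (θ - 1)) s := by
    intro s hs
    simpa using Real.hasDerivAt_rpow_const (p := θ) (Or.inl hs.ne')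
  set g : ℝ → ℝ := fun s =>
    Real.log (2 * θ ^ 2 * γ) + (θ - 2) * Real.log s - 2 * Real.log (γ + s ^ θ) with hg
  have hZg : ∀ s : ℝ, 0 < s → Z s = g s := by
    intro s hs
    have h1 : (0:ℝ) < 2 * θ ^ 2 * γ := by positivity
    have h2' : (0:ℝ) < s ^ (θ - 2) := Real.rpow_pos_of_pos hs _
    have h3 : (0:ℝ) < (γ + s ^ θ) ^ 2 := pow_pos (hden s hs) 2
    rw [hZ s hs, Real.log_div (by positivity) h3.ne', Real.log_mul h1.ne' h2'.ne',
        Real.log_pow, Real.log_rpow hs, hg]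
    push_cast
    ring
  have hgd : ∀ s : ℝ, 0 < s →
      HasDerivAt g ((θ - 2) / s - 2 * (θ * s ^ (θ - 1)) / (γ + s ^ θ)) s := by
    intro s hs
    have hlog : HasDerivAt (fun x : ℝ => Real.log x) (1 / s) s := by
      simpa using Real.hasDerivAt_log hs.ne'
    have hl2 : HasDerivAt (fun x : ℝ => Real.log (γ + x ^ θ))
        ((θ * s ^ (θ - 1)) / (γ + s ^ θ)) s :=
      ((hpow s hs).const_add γ).log (hden s hs).ne'
    have h := ((hlog.const_mul (θ - 2)).const_add (Real.log (2 * θ ^ 2 * γ))).sub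
      (hl2.const_mul 2)
    refine h.congr_deriv ?_
    ring
  have hZd : ∀ s : ℝ, 0 < s →
      deriv Z s = (θ - 2) / s - 2 * (θ * s ^ (θ - 1)) / (γ + s ^ θ) := by
    intro s hs
    have hev : Z =ᶠ[nhds s] g := by
      filter_upwards [Ioi_mem_nhds hs] with x hx
      exact hZg x hx
    rw [hev.deriv_eq]
    exact (hgd s hs).deriv
  intro r hr
  set F : ℝ → ℝ := fun s => (θ - 2) - 2 * θ * (s ^ θ / (γ + s ^ θ)) with hF
  have hev : (fun s : ℝ => s * deriv Z s) =ᶠ[nhds r] F := by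
    filter_upwards [Ioi_mem_nhds hr] with s hs
    have hs' : (0:ℝ) < s := hs
    rw [hZd s hs']
    have hsp : s ^ (θ - 1) = s ^ θ / s := by
      rw [Real.rpow_sub hs', Real.rpow_one]
    rw [hF, hsp]
    field_simp
  have hFd : HasDerivAt F (-(2 * θ ^ 2 * γ * r ^ (θ - 1) / (γ + r ^ θ) ^ 2)) r := by
    have hdiv : HasDerivAt (fun s : ℝ => s ^ θ / (γ + s ^ θ))
        ((θ * r ^ (θ - 1) * (γ + r ^ θ) - r ^ θ * (θ * r ^ (θ - 1))) / (γ + r ^ θ) ^ 2) r :=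
      (hpow r hr).div ((hpow r hr).const_add γ) (hden r hr).ne'
    have h := (hdiv.const_mul (2 * θ)).const_sub (θ - 2)
    refine h.congr_deriv ?_
    field_simp
    ring
  rw [hev.deriv_eq, hFd.deriv, hZ r hr, Real.exp_log (hnum r hr)]
  have hrp : r ^ (θ - 2) = r ^ (θ - 1) / r := by
    rw [show θ - 2 = θ - 1 - 1 by ring, Real.rpow_sub hr, Real.rpow_one]
  rw [hrp]
  field_simp
end

section
/- For θ > 2 and γ = ((θ+2)/(θ-2))·((θ²-4)/2)^(θ/2), the function η(r) = √(θγ) r^(θ/2)/(γ + r^θ) satisfies the singular eigenvalue equation -(r η'(r))' = r (e^{Z(r)} - (θ/2)²/r²) η(r) for all r > 0, where Z(r) = log(2θ²γ r^(θ-2)/(γ + r^θ)²). -/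
open Real

/-- `η(r) = √(θγ) r^(θ/2)/(γ + r^θ)` solves the singular eigenvalue equation
`-(r η')' = r (e^Z - (θ/2)²/r²) η` on `(0,∞)`. -/
theorem stmt4 (θ : ℝ) (hθ : 2 < θ)
    (γ : ℝ) (hγ : γ = (θ + 2) / (θ - 2) * ((θ ^ 2 - 4) / 2) ^ (θ / 2))
    (Z η : ℝ → ℝ)
    (hZ : ∀ r : ℝ, 0 < r →
      Z r = Real.log (2 * θ ^ 2 * γ * r ^ (θ - 2) / (γ + r ^ θ) ^ 2))
    (hη : ∀ r : ℝ, 0 < r →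
      η r = Real.sqrt (θ * γ) * r ^ (θ / 2) / (γ + r ^ θ)) :
    ∀ r : ℝ, 0 < r →
      -(deriv (fun s : ℝ => s * deriv η s) r)
        = r * (Real.exp (Z r) - (θ / 2) ^ 2 / r ^ 2) * η r := by
  intro r hr
  have hθ0 : (0:ℝ) < θ := by linarith
  have hγ0 : 0 < γ := by
    rw [hγ]
    apply mul_pos
    · apply div_pos <;> linarith
    · apply Real.rpow_pos_of_pos; nlinarith
  set c := Real.sqrt (θ * γ) with hc
  have hF' : ∀ s : ℝ, 0 < s → HasDerivAt η
      ((c * (θ/2 * s^(θ/2-1)) * (γ + s^θ) - c * s^(θ/2) * (θ * s^(θ-1))) / (γ + s^θ)^2) s := by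
    intro s hs
    have hD : 0 < γ + s ^ θ := add_pos hγ0 (Real.rpow_pos_of_pos hs θ)
    have h1 : HasDerivAt (fun x : ℝ => x ^ (θ/2)) (θ/2 * s ^ (θ/2 - 1)) s :=
      Real.hasDerivAt_rpow_const (Or.inl hs.ne')
    have h2 : HasDerivAt (fun x : ℝ => x ^ θ) (θ * s ^ (θ - 1)) s :=
      Real.hasDerivAt_rpow_const (Or.inl hs.ne')
    have hf := (h1.const_mul c).div (h2.const_add γ) hD.ne'
    exact hf.congr_of_eventuallyEq
      (Filter.eventuallyEq_of_mem (Ioi_mem_nhds hs) fun x hx => hη x hx)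
  have hderivη : ∀ s : ℝ, 0 < s → deriv η s
      = (c * (θ/2 * s^(θ/2-1)) * (γ + s^θ) - c * s^(θ/2) * (θ * s^(θ-1))) / (γ + s^θ)^2 :=
    fun s hs => (hF' s hs).deriv
  have hEq : (fun s : ℝ => s * deriv η s) =ᶠ[nhds r] fun s : ℝ =>
      s * ((c * (θ/2 * s^(θ/2-1)) * (γ + s^θ) - c * s^(θ/2) * (θ * s^(θ-1))) / (γ + s^θ)^2) :=
    Filter.eventuallyEq_of_mem (Ioi_mem_nhds hr) fun s hs => by rw [hderivη s hs]
  rw [hEq.deriv_eq]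
  have hD : 0 < γ + r ^ θ := add_pos hγ0 (Real.rpow_pos_of_pos hr θ)
  have hp1 : HasDerivAt (fun x : ℝ => x ^ (θ/2-1)) ((θ/2-1) * r ^ (θ/2-1-1)) r :=
    Real.hasDerivAt_rpow_const (Or.inl hr.ne')
  have hp2 : HasDerivAt (fun x : ℝ => x ^ (θ/2)) (θ/2 * r ^ (θ/2-1)) r :=
    Real.hasDerivAt_rpow_const (Or.inl hr.ne')
  have hp3 : HasDerivAt (fun x : ℝ => x ^ (θ-1)) ((θ-1) * r ^ (θ-1-1)) r :=
    Real.hasDerivAt_rpow_const (Or.inl hr.ne')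
  have hp4 : HasDerivAt (fun x : ℝ => x ^ θ) (θ * r ^ (θ-1)) r :=
    Real.hasDerivAt_rpow_const (Or.inl hr.ne')
  have hden : HasDerivAt (fun x : ℝ => (γ + x ^ θ)^2) (2 * (γ + r^θ)^1 * (θ * r^(θ-1))) r :=
    (hp4.const_add γ).pow 2
  have hnum : HasDerivAt (fun x : ℝ =>
      c * (θ/2 * x^(θ/2-1)) * (γ + x^θ) - c * x^(θ/2) * (θ * x^(θ-1)))
      ((c * (θ/2 * ((θ/2-1) * r ^ (θ/2-1-1)))) * (γ + r^θ)
        + (c * (θ/2 * r^(θ/2-1))) * (θ * r^(θ-1))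
        - ((c * (θ/2 * r^(θ/2-1))) * (θ * r^(θ-1))
            + (c * r^(θ/2)) * (θ * ((θ-1) * r^(θ-1-1))))) r :=
    (((hp1.const_mul (θ/2)).const_mul c).mul (hp4.const_add γ)).sub
      ((hp2.const_mul c).mul (hp3.const_mul θ))
  have hG := (hasDerivAt_id' (x := r)).mul (hnum.div hden (pow_ne_zero 2 hD.ne'))
  erw [hG.deriv]
  simp only [Pi.div_apply]
  rw [hZ r hr, hη r hr, Real.exp_log (by positivity)]
  -- rewrite rpow expressions in terms of a := r ^ (θ/2)
  have ha2 : r ^ θ = (r ^ (θ/2))^2 := by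
    rw [← Real.rpow_natCast (r ^ (θ/2)) 2, ← Real.rpow_mul hr.le]
    norm_num
  set a := r ^ (θ/2) with ha
  have ha0 : 0 < a := Real.rpow_pos_of_pos hr _
  have hDa : (0:ℝ) < γ + a^2 := by nlinarith
  have e1 : r ^ (θ/2-1) = a / r := by
    rw [Real.rpow_sub hr, Real.rpow_one]
  have e2 : r ^ (θ/2-1-1) = a / r / r := by
    rw [Real.rpow_sub hr, Real.rpow_one, e1]
  have e3 : r ^ (θ-1) = a^2 / r := by
    rw [Real.rpow_sub hr, Real.rpow_one, ha2]
  have e4 : r ^ (θ-1-1) = a^2 / r / r := by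
    rw [Real.rpow_sub hr, Real.rpow_one, e3]
  have e5 : r ^ (θ-2) = a^2 / r / r := by
    rw [show θ - 2 = θ - 1 - 1 by ring, e4]
  rw [e2, e4, e1, e3, e5, ha2]
  field_simp
  ring
end

section
/- Let (θ_i) be the sequence defined by θ₀ = 2 and θ_i = 2/W((2/(2+θ_{i-1})) e^{-2/(2+θ_{i-1})}) + 2 for i ≥ 1, where W is the principal branch of the Lambert W function. Then for every i ≥ 1 we have 8i + 2 < θ_i < 8i + 4. -/
open Real

private lemma cubic_le_exp {x : ℝ} (hx : 0 ≤ x) :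
    1 + x + x ^ 2 / 2 + x ^ 3 / 6 ≤ Real.exp x := by
  have h := Real.sum_le_exp_of_nonneg hx 4
  rw [Finset.sum_range_succ, Finset.sum_range_succ, Finset.sum_range_succ,
    Finset.sum_range_succ] at h
  norm_num [Nat.factorial] at h
  linarith

private lemma exp_le_cubic {z : ℝ} (h0 : 0 ≤ z) (h1 : z ≤ 1) :
    Real.exp z ≤ 1 + z + z ^ 2 / 2 + 2 / 9 * z ^ 3 := by
  have h := Real.exp_bound' h0 h1 (n := 3) (by norm_num)
  rw [Finset.sum_range_succ, Finset.sum_range_succ, Finset.sum_range_succ] at h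
  norm_num [Nat.factorial] at h
  linarith

/-- monotonicity of `t ↦ t e^{-t}` on `(0, 1]`. -/
private lemma te_mono {a A : ℝ} (ha : 0 < a) (haA : a ≤ A) (hA : A ≤ 1) :
    a * Real.exp (-a) ≤ A * Real.exp (-A) := by
  have h1 : (a - A) + 1 ≤ Real.exp (a - A) := Real.add_one_le_exp _
  have hA0 : 0 < A := lt_of_lt_of_le ha haA
  have h2 : a ≤ A * Real.exp (a - A) := by nlinarith
  have e1 : A * Real.exp (-A) = (A * Real.exp (a - A)) * Real.exp (-a) := by
    rw [mul_assoc, ← Real.exp_add]; ring_nf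
  rw [e1]
  have := Real.exp_pos (-a)
  nlinarith

private lemma w_bounds {w a u l : ℝ} (heq : w * Real.exp w = a * Real.exp (-a))
    (ha : 0 < a) (hu : 0 < u) (hl : 0 < l)
    (hup : a * Real.exp (-a) < u * Real.exp u)
    (hlo : l * Real.exp l < a * Real.exp (-a)) :
    l < w ∧ w < u := by
  have hpos : 0 < w := by
    by_contra h
    push_neg at h
    have h1 : 0 < a * Real.exp (-a) := mul_pos ha (Real.exp_pos _)
    nlinarith [Real.exp_pos w]
  constructor
  · by_contra h
    push_neg at h
    have : w * Real.exp w ≤ l * Real.exp l :=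
      mul_le_mul h (Real.exp_le_exp.2 h) (Real.exp_pos w).le hl.le
    linarith [heq ▸ this]
  · by_contra h
    push_neg at h
    have : u * Real.exp u ≤ w * Real.exp w :=
      mul_le_mul h (Real.exp_le_exp.2 h) (Real.exp_pos u).le hpos.le
    linarith [heq ▸ this]

/-- Key lower-bound exponential inequality ("trapezoid"). -/
private lemma expA {q : ℝ} (hq : 4 ≤ q) :
    (q + 4) / q < Real.exp (2 / q + 2 / (q + 4)) := by
  have hq0 : (0:ℝ) < q := by linarith
  have hq4 : (0:ℝ) < q + 4 := by linarith
  have hq2 : (0:ℝ) < q + 2 := by linarith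
  set y : ℝ := 2 / q + 2 / (q + 4) with hy
  clear_value y
  have hy0 : 0 ≤ y := by rw [hy]; positivity
  have hc := cubic_le_exp hy0
  have hym : 4 / (q + 2) ≤ y := by
    rw [hy, div_add_div _ _ (ne_of_gt hq0) (ne_of_gt hq4), div_le_div_iff₀ hq2 (by positivity)]
    nlinarith
  have hy4 : y + 8 / (q * (q + 4)) = 4 / q := by
    rw [hy]; field_simp; ring
  have hrat : 8 / (q * (q + 4)) < 16 / (q + 2) ^ 2 / 2 + 64 / (q + 2) ^ 3 / 6 := by
    rw [div_div, div_div, div_add_div _ _ (by positivity) (by positivity),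
      div_lt_div_iff₀ (by positivity) (by positivity)]
    have hquad : 24 * (q + 2) ^ 3 < (24 * (q + 2) + 32) * (q * (q + 4)) := by nlinarith
    nlinarith [mul_lt_mul_of_pos_left hquad (by positivity : (0:ℝ) < (q + 2) ^ 2)]
  have hsq : (4 / (q + 2)) ^ 2 ≤ y ^ 2 := by
    apply pow_le_pow_left₀ (by positivity) hym
  have hcb : (4 / (q + 2)) ^ 3 ≤ y ^ 3 := by
    apply pow_le_pow_left₀ (by positivity) hym
  have e2 : (4 / (q + 2)) ^ 2 = 16 / (q + 2) ^ 2 := by rw [div_pow]; norm_num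
  have e3 : (4 / (q + 2)) ^ 3 = 64 / (q + 2) ^ 3 := by rw [div_pow]; norm_num
  have key : (q + 4) / q < 1 + y + y ^ 2 / 2 + y ^ 3 / 6 := by
    have h4q : (q + 4) / q = 1 + 4 / q := by field_simp
    rw [h4q, ← hy4]
    rw [e2] at hsq
    rw [e3] at hcb
    linarith
  linarith

/-- Key upper-bound exponential inequality. -/
private lemma expB {S L ε : ℝ} (hS : 13 ≤ S) (hL : L = S + 4 + ε) (hε0 : 0 < ε)
    (hε : ε ≤ 1 / 2) (hεS : 64 ≤ ε * S ^ 2) :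
    Real.exp (2 / S + 2 / L) < L / S := by
  have hS0 : (0:ℝ) < S := by linarith
  have hL0 : (0:ℝ) < L := by rw [hL]; linarith
  set z : ℝ := 2 / S + 2 / L with hz
  clear_value z
  have hz0 : 0 ≤ z := by rw [hz]; positivity
  have hzS : z ≤ 4 / S := by
    have h1 : 2 / L ≤ 2 / S := by
      apply div_le_div_of_nonneg_left (by norm_num) hS0 (by rw [hL]; linarith)
    have h2 : (4:ℝ) / S = 2 / S + 2 / S := by ring
    rw [hz, h2]; linarith
  have hz1 : z ≤ 1 := by
    have : (4:ℝ) / S ≤ 4 / 13 := by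
      apply div_le_div_of_nonneg_left (by norm_num) (by norm_num) hS
    linarith
  have hc := exp_le_cubic hz0 hz1
  have hsq : z ^ 2 ≤ (4 / S) ^ 2 := pow_le_pow_left₀ hz0 hzS 2
  have hcb : z ^ 3 ≤ (4 / S) ^ 3 := pow_le_pow_left₀ hz0 hzS 3
  have key : 1 + z + (4 / S) ^ 2 / 2 + 2 / 9 * (4 / S) ^ 3 < L / S := by
    have hLS : L / S = 1 + (4 + ε) / S := by rw [hL]; field_simp; ring
    rw [hLS, hz]
    have hgap : (4 + ε) / S - (2 / S + 2 / L) = (ε * S + ε ^ 2 + 6 * ε + 8) / (S * L) := by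
      rw [hL]; field_simp; ring
    have e2 : (4 / S) ^ 2 / 2 = 8 / S ^ 2 := by rw [div_pow]; ring
    have e3 : (2:ℝ) / 9 * (4 / S) ^ 3 = 128 / (9 * S ^ 3) := by rw [div_pow]; ring
    rw [e2, e3]
    have hfinal : 8 / S ^ 2 + 128 / (9 * S ^ 3) < (ε * S + ε ^ 2 + 6 * ε + 8) / (S * L) := by
      rw [div_add_div _ _ (by positivity) (by positivity),
        div_lt_div_iff₀ (by positivity) (by positivity)]
      rw [hL]
      have hS4 : (0:ℝ) < S ^ 4 := by positivity
      have hS3 : (0:ℝ) < S ^ 3 := by positivity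
      have hS5 : (0:ℝ) < S ^ 5 := by positivity
      have hC : 576 * S ^ 4 ≤ 9 * ε * S ^ 6 := by
        have h := mul_le_mul_of_nonneg_right hεS hS4.le
        calc 576 * S ^ 4 = 9 * (64 * S ^ 4) := by ring
          _ ≤ 9 * (ε * S ^ 2 * S ^ 4) := by linarith
          _ = 9 * ε * S ^ 6 := by ring
      have hA : 72 * (ε * S ^ 4) ≤ 36 * S ^ 4 := by
        have h := mul_le_mul_of_nonneg_right hε hS4.le
        nlinarith
      have hB : 128 * (ε * S ^ 3) ≤ 64 * S ^ 3 := by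
        have h := mul_le_mul_of_nonneg_right hε hS3.le
        nlinarith
      have hD : 169 * S ^ 3 ≤ 13 * S ^ 4 := by
        have h := mul_le_mul_of_nonneg_right hS hS3.le
        nlinarith
      have hE : (0:ℝ) ≤ ε ^ 2 * S ^ 5 := by positivity
      have hF : (0:ℝ) < ε * S ^ 5 := by positivity
      ring_nf
      ring_nf at hC hA hB hD hE hF
      linarith
    linarith
  calc Real.exp z ≤ 1 + z + z ^ 2 / 2 + 2 / 9 * z ^ 3 := hc
    _ ≤ 1 + z + (4 / S) ^ 2 / 2 + 2 / 9 * (4 / S) ^ 3 := by linarith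
    _ < L / S := key

/-- One induction step, abstracted. -/
private lemma step {w s q S L : ℝ} (heq : w * Real.exp w = 2 / s * Real.exp (-(2 / s)))
    (hq : 4 ≤ q) (h1 : q ≤ s) (h2 : s ≤ S) (hSL : S + 4 ≤ L)
    (hupExp : (q + 4) / q < Real.exp (2 / q + 2 / (q + 4)))
    (hloExp : Real.exp (2 / S + 2 / L) < L / S) :
    q + 6 < 2 / w + 2 ∧ 2 / w + 2 < L + 2 := by
  have hq0 : (0:ℝ) < q := by linarith
  have hs0 : (0:ℝ) < s := by linarith
  have hS0 : (0:ℝ) < S := by linarith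
  have hL0 : (0:ℝ) < L := by linarith
  have hq40 : (0:ℝ) < q + 4 := by linarith
  have ha0 : 0 < 2 / s := by positivity
  have hu0 : 0 < 2 / (q + 4) := by positivity
  have hl0 : 0 < 2 / L := by positivity
  have hB0 : 0 < 2 / S := by positivity
  have haA : 2 / s ≤ 2 / q := div_le_div_of_nonneg_left (by norm_num) hq0 h1
  have hBa : 2 / S ≤ 2 / s := div_le_div_of_nonneg_left (by norm_num) hs0 h2
  have hA1 : 2 / q ≤ 1 := by rw [div_le_one hq0]; linarith
  have ha1 : 2 / s ≤ 1 := le_trans haA hA1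
  -- upper bound target:  (2/q) e^{-2/q} < (2/(q+4)) e^{2/(q+4)}
  have hAu : 2 / q * Real.exp (-(2 / q)) < 2 / (q + 4) * Real.exp (2 / (q + 4)) := by
    have h3 : 2 / q < 2 / (q + 4) * Real.exp (2 / q + 2 / (q + 4)) := by
      have hAu' : 2 / q = 2 / (q + 4) * ((q + 4) / q) := by field_simp
      calc 2 / q = 2 / (q + 4) * ((q + 4) / q) := hAu'
        _ < 2 / (q + 4) * Real.exp (2 / q + 2 / (q + 4)) :=
            mul_lt_mul_of_pos_left hupExp hu0
    have e1 : 2 / (q + 4) * Real.exp (2 / (q + 4)) =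
        (2 / (q + 4) * Real.exp (2 / q + 2 / (q + 4))) * Real.exp (-(2 / q)) := by
      rw [mul_assoc, ← Real.exp_add]
      congr 2
      ring
    rw [e1]
    have hep := Real.exp_pos (-(2 / q))
    nlinarith
  -- lower bound target:  (2/L) e^{2/L} < (2/S) e^{-2/S}
  have hlB : 2 / L * Real.exp (2 / L) < 2 / S * Real.exp (-(2 / S)) := by
    have h3 : 2 / L * Real.exp (2 / S + 2 / L) < 2 / S := by
      have hBl : 2 / L * (L / S) = 2 / S := by field_simp
      calc 2 / L * Real.exp (2 / S + 2 / L) < 2 / L * (L / S) :=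
            mul_lt_mul_of_pos_left hloExp hl0
        _ = 2 / S := hBl
    have e1 : 2 / L * Real.exp (2 / L) =
        (2 / L * Real.exp (2 / S + 2 / L)) * Real.exp (-(2 / S)) := by
      rw [mul_assoc, ← Real.exp_add]
      congr 2
      ring
    rw [e1]
    have hep := Real.exp_pos (-(2 / S))
    nlinarith
  have hup : 2 / s * Real.exp (-(2 / s)) < 2 / (q + 4) * Real.exp (2 / (q + 4)) :=
    lt_of_le_of_lt (te_mono ha0 haA hA1) hAu
  have hlo : 2 / L * Real.exp (2 / L) < 2 / s * Real.exp (-(2 / s)) :=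
    lt_of_lt_of_le hlB (te_mono hB0 hBa ha1)
  obtain ⟨hwl, hwu⟩ := w_bounds heq ha0 hu0 hl0 hup hlo
  have hw0 : 0 < w := lt_trans hl0 hwl
  constructor
  · have hlt : 2 / (2 / (q + 4)) < 2 / w :=
      div_lt_div_of_pos_left (by norm_num) hw0 hwu
    have hu2 : 2 / (2 / (q + 4)) = q + 4 := by field_simp
    rw [hu2] at hlt
    linarith
  · have hlt : 2 / w < 2 / (2 / L) :=
      div_lt_div_of_pos_left (by norm_num) hl0 hwl
    have hl2 : 2 / (2 / L) = L := by field_simp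
    rw [hl2] at hlt
    linarith

/-- For the sequence `θ₀ = 2`, `θ_i = 2/W((2/(2+θ_{i-1})) e^{-2/(2+θ_{i-1})}) + 2` (with `W`
the principal Lambert W branch, characterized by `w e^w = x` and `w ≥ -1`), one has
`8i + 2 < θ_i < 8i + 4` for every `i ≥ 1`. -/
theorem stmt6 (θ : ℕ → ℝ) (h0 : θ 0 = 2)
    (hrec : ∀ i : ℕ, 1 ≤ i → ∃ w : ℝ, -1 ≤ w ∧
      w * Real.exp w = (2 / (2 + θ (i - 1))) * Real.exp (-(2 / (2 + θ (i - 1)))) ∧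
      θ i = 2 / w + 2) :
    ∀ i : ℕ, 1 ≤ i → 8 * (i : ℝ) + 2 < θ i ∧ θ i < 8 * (i : ℝ) + 4 := by
  have aux : ∀ i : ℕ, 1 ≤ i →
      8 * (i : ℝ) + 2 < θ i ∧ θ i < 8 * (i : ℝ) + 4 - 1 / (i : ℝ) := by
    intro i hi
    induction i, hi using Nat.le_induction with
    | base =>
      obtain ⟨w, _, heq, hθ⟩ := hrec 1 le_rfl
      simp only [Nat.sub_self, h0] at heq
      have heq' : w * Real.exp w = 2 / (4:ℝ) * Real.exp (-(2 / (4:ℝ))) := by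
        norm_num at heq ⊢; convert heq using 3 <;> norm_num
      have hloExp : Real.exp (2 / (4:ℝ) + 2 / (9:ℝ)) < 9 / 4 := by
        have h1318 : (2:ℝ) / 4 + 2 / 9 = 13 / 18 := by norm_num
        rw [h1318]
        have hc := exp_le_cubic (z := 13 / 18) (by norm_num) (by norm_num)
        nlinarith
      have := step (q := 4) (S := 4) (L := 9) heq' (by norm_num) le_rfl le_rfl
        (by norm_num) (expA (by norm_num)) hloExp
      rw [← hθ] at this
      push_cast
      constructor <;> [linarith [this.1]; linarith [this.2]]
    | succ i hi ih =>
      obtain ⟨hlow, hhigh⟩ := ih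
      obtain ⟨w, _, heq, hθ⟩ := hrec (i + 1) (by omega)
      simp only [Nat.add_sub_cancel] at heq
      set n : ℝ := (i : ℝ) with hn
      have hn1 : (1:ℝ) ≤ n := by rw [hn]; exact_mod_cast hi
      have hn0 : (0:ℝ) < n := by linarith
      set s : ℝ := 2 + θ i with hs
      set q : ℝ := 8 * n + 4 with hq
      set S : ℝ := 8 * n + 6 - 1 / n with hS
      set L : ℝ := 8 * n + 10 - 1 / (n + 1) with hL
      set ε : ℝ := 1 / n - 1 / (n + 1) with hε
      clear_value n s q S L ε
      have hε0 : 0 < ε := by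
        rw [hε]
        have : 1 / (n + 1) < 1 / n := by
          apply div_lt_div_of_pos_left (by norm_num) hn0 (by linarith)
        linarith
      have hεhalf : ε ≤ 1 / 2 := by
        rw [hε]
        have h1 : 1 / n ≤ 1 := by rw [div_le_one hn0]; linarith
        have h2 : 0 < 1 / (n + 1) := by positivity
        have h3 : (1:ℝ) / 2 ≤ 1 / (n + 1) + 1 / 2 → True := fun _ => trivial
        have h4 : 1 / (n + 1) ≥ 1 / (n + n) := by
          apply div_le_div_of_nonneg_left (by norm_num) (by positivity) (by linarith)
        have h5 : 1 / (n + n) = 1 / 2 * (1 / n) := by field_simp; ring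
        linarith
      have hεn : ε * (n * (n + 1)) = 1 := by
        rw [hε]; field_simp; ring
      have hS13 : 13 ≤ S := by
        rw [hS]
        have : 1 / n ≤ 1 := by rw [div_le_one hn0]; linarith
        linarith
      have hεS : 64 ≤ ε * S ^ 2 := by
        have hS5 : 8 * n + 5 ≤ S := by
          rw [hS]
          have : 1 / n ≤ 1 := by rw [div_le_one hn0]; linarith
          linarith
        have h1 : (8 * n + 5) ^ 2 ≤ S ^ 2 := by nlinarith
        have h2 : ε * (8 * n + 5) ^ 2 ≤ ε * S ^ 2 :=
          mul_le_mul_of_nonneg_left h1 hε0.le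
        nlinarith
      have hLSε : L = S + 4 + ε := by rw [hL, hS, hε]; ring
      have hq4 : (4:ℝ) ≤ q := by rw [hq]; linarith
      have hqs : q ≤ s := by rw [hq, hs]; linarith
      have hsS : s ≤ S := by rw [hs, hS]; linarith
      have hSL : S + 4 ≤ L := by rw [hLSε]; linarith
      have := step heq hq4 hqs hsS hSL (expA hq4)
        (expB hS13 hLSε hε0 hεhalf hεS)
      rw [← hθ] at this
      obtain ⟨t1, t2⟩ := this
      constructor
      · rw [hq] at t1
        push_cast
        rw [← hn]
        linarith
      · push_cast
        rw [← hn]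
        linarith
  intro i hi
  obtain ⟨h1, h2⟩ := aux i hi
  have : 0 < 1 / (i : ℝ) := by
    have : (0:ℝ) < i := by exact_mod_cast hi
    positivity
  exact ⟨h1, by linarith⟩
end

section
/- Let (θ_i) be defined by θ₀ = 2 and θ_i = 2/W((2/(2+θ_{i-1})) e^{-2/(2+θ_{i-1})}) + 2, where W is the principal Lambert W function. Then the sequence (θ_i) is strictly increasing. -/
open Real

lemma stmt7_key (t : ℝ) (ht : 0 < t) (w : ℝ)
    (heq : w * Real.exp w = (2 / (2 + t)) * Real.exp (-(2 / (2 + t)))) :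
    t < 2 / w + 2 ∧ 0 < 2 / w + 2 := by
  set x := 2 / (2 + t) with hxdef
  have h2t : 0 < 2 + t := by linarith
  have hx : 0 < x := by positivity
  have hwpos : 0 < w := by
    by_contra h
    push_neg at h
    have h1 : w * Real.exp w ≤ 0 :=
      mul_nonpos_of_nonpos_of_nonneg h (Real.exp_pos w).le
    have h2 : 0 < x * Real.exp (-x) := by positivity
    linarith
  have hwx : w < x := by
    by_contra h
    push_neg at h
    have h1 : x * Real.exp x ≤ w * Real.exp w :=
      mul_le_mul h (Real.exp_le_exp.2 h) (Real.exp_pos x).le hwpos.le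
    have h2 : x * Real.exp (-x) < x * Real.exp x :=
      mul_lt_mul_of_pos_left (Real.exp_lt_exp.2 (by linarith)) hx
    linarith
  have h2x : 2 / x = 2 + t := by
    rw [hxdef]
    field_simp
  have hlt : 2 / x < 2 / w := div_lt_div_of_pos_left (by norm_num) hwpos hwx
  constructor <;> [linarith; positivity]

/-- The sequence `θ₀ = 2`, `θ_i = 2/W((2/(2+θ_{i-1})) e^{-2/(2+θ_{i-1})}) + 2` (with `W` the
principal Lambert W branch) is strictly increasing. -/
theorem stmt7 (θ : ℕ → ℝ) (h0 : θ 0 = 2)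
    (hrec : ∀ i : ℕ, 1 ≤ i → ∃ w : ℝ, -1 ≤ w ∧
      w * Real.exp w = (2 / (2 + θ (i - 1))) * Real.exp (-(2 / (2 + θ (i - 1)))) ∧
      θ i = 2 / w + 2) :
    StrictMono θ := by
  have step : ∀ i : ℕ, 0 < θ i → θ i < θ (i + 1) ∧ 0 < θ (i + 1) := by
    intro i hi
    obtain ⟨w, _, heq, hval⟩ := hrec (i + 1) (by omega)
    simp only [Nat.add_sub_cancel] at heq hval
    obtain ⟨h1, h2⟩ := stmt7_key (θ i) hi w heq
    rw [hval]
    exact ⟨h1, h2⟩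
  have hpos : ∀ i : ℕ, 0 < θ i := by
    intro i
    induction i with
    | zero => rw [h0]; norm_num
    | succ n ih => exact (step n ih).2
  exact strictMono_nat_of_lt_succ fun n => (step n (hpos n)).1
end

section
/- Define x_i = 2/(2+θ_i) where θ₀ = 2 and θ_i = 2/W(x_{i-1} e^{-x_{i-1}}) + 2 with W the principal Lambert W function. Then the sequence (x_i) satisfies x₀ = 1/2, x_i ∈ (0,1) for all i, and x_i is strictly decreasing with x_i → 0 as i → ∞. -/
open Real Filter

/-- The auxiliary sequence `x_i = 2/(2+θ_i)` (with `θ₀ = 2` and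
`θ_i = 2/W(x_{i-1} e^{-x_{i-1}}) + 2`, `W` the principal Lambert W branch) satisfies
`x₀ = 1/2`, `x_i ∈ (0,1)`, is strictly decreasing, and tends to `0`. -/
theorem stmt13 (θ x : ℕ → ℝ) (h0 : θ 0 = 2)
    (hx : ∀ i : ℕ, x i = 2 / (2 + θ i))
    (hrec : ∀ i : ℕ, 1 ≤ i → ∃ w : ℝ, 0 < w ∧
      w * Real.exp w = x (i - 1) * Real.exp (-(x (i - 1))) ∧
      θ i = 2 / w + 2) :
    x 0 = 1 / 2 ∧
    (∀ i : ℕ, 0 < x i ∧ x i < 1) ∧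
    StrictAnti x ∧
    Tendsto x atTop (nhds 0) := by
  have hx0 : x 0 = 1 / 2 := by rw [hx 0, h0]; norm_num
  -- key step lemma
  have key : ∀ i : ℕ, 0 < x i → 0 < x (i + 1) ∧ 1 / x i + 3 ≤ 1 / x (i + 1) := by
    intro i hi
    obtain ⟨w, hw, hwe, hθ⟩ := hrec (i + 1) (by omega)
    simp only [Nat.add_sub_cancel] at hwe
    have hex : (1 : ℝ) ≤ Real.exp w := Real.one_le_exp hw.le
    have h1x : (0 : ℝ) < 1 + x i := by linarith
    have hbound : w ≤ x i / (1 + x i) := by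
      have h1 : w ≤ w * Real.exp w := le_mul_of_one_le_right hw.le hex
      have h2 : Real.exp (-(x i)) ≤ 1 / (1 + x i) := by
        rw [Real.exp_neg]
        rw [one_div]
        exact inv_anti₀ h1x (by linarith [Real.add_one_le_exp (x i)])
      have h3 : x i * Real.exp (-(x i)) ≤ x i * (1 / (1 + x i)) :=
        mul_le_mul_of_nonneg_left h2 hi.le
      calc w ≤ w * Real.exp w := h1
        _ = x i * Real.exp (-(x i)) := hwe
        _ ≤ x i / (1 + x i) := by rw [mul_one_div] at h3; exact h3
    have hinv : 1 / x i + 1 ≤ 1 / w := by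
      have := one_div_le_one_div_of_le hw hbound
      rw [one_div_div] at this
      have hxne : x i ≠ 0 := hi.ne'
      calc 1 / x i + 1 = (1 + x i) / x i := by field_simp
        _ ≤ 1 / w := this
    have hxv : x (i + 1) = 2 / (4 + 2 / w) := by
      rw [hx (i + 1), hθ]; ring_nf
    have hden : 0 < 4 + 2 / w := by positivity
    constructor
    · rw [hxv]; positivity
    · rw [hxv, one_div_div]
      have : (4 + 2 / w) / 2 = 2 + 1 / w := by ring
      rw [this]; linarith
  -- positivity and inverse growth
  have main : ∀ i : ℕ, 0 < x i ∧ 3 * (i : ℝ) + 2 ≤ 1 / x i := by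
    intro i
    induction i with
    | zero => rw [hx0]; norm_num
    | succ n ih =>
        obtain ⟨hp, hb⟩ := ih
        obtain ⟨hp', hb'⟩ := key n hp
        refine ⟨hp', ?_⟩
        push_cast
        linarith
  have hpos : ∀ i, 0 < x i := fun i => (main i).1
  have hlt1 : ∀ i, x i < 1 := by
    intro i
    have h2 : (2 : ℝ) ≤ 1 / x i := by have := (main i).2; have : (0:ℝ) ≤ (i:ℝ) := Nat.cast_nonneg i; linarith [(main i).2]
    have hp := hpos i
    have e1 : x i * (1 / x i) = 1 := by field_simp
    nlinarith
  have hanti : StrictAnti x := by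
    apply strictAnti_nat_of_succ_lt
    intro n
    have ⟨hp', hb'⟩ := key n (hpos n)
    have hp := hpos n
    have h1 : 1 / x n < 1 / x (n + 1) := by linarith
    have e1 : x n * (1 / x n) = 1 := by field_simp
    have e2 : x (n + 1) * (1 / x (n + 1)) = 1 := by field_simp
    nlinarith [mul_pos hp (sub_pos.mpr h1), one_div_pos.mpr hp', mul_pos hp hp']
  refine ⟨hx0, fun i => ⟨hpos i, hlt1 i⟩, hanti, ?_⟩
  have hub : ∀ i : ℕ, x i ≤ 1 / ((i : ℝ) + 1) := by
    intro i
    have hb := (main i).2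
    have hp := hpos i
    have hi1 : (0 : ℝ) < (i : ℝ) + 1 := by positivity
    have e1 : x i * (1 / x i) = 1 := by field_simp
    have h4 := mul_le_mul_of_nonneg_left hb hp.le
    rw [le_div_iff₀ hi1]
    have hcast : (0 : ℝ) ≤ (i : ℝ) := Nat.cast_nonneg i
    nlinarith
  have h0le : ∀ i : ℕ, (0 : ℝ) ≤ x i := fun i => (hpos i).le
  exact squeeze_zero h0le hub tendsto_one_div_add_atTop_nhds_zero_nat
end

section
/- For the Lane-Emden Morse index formula with m nodal zones and parameter α ≥ 0: if θ_i > 2 satisfies 8i+2 < θ_i < 8i+4 for 1 ≤ i ≤ m-1, then the value m + 2⌈α/2⌉ + 2·Σ_{i=1}^{m-1} ⌊((2+α)/4)·θ_i⌋ is strictly greater than m + 2(m-1)(1 + ⌊α/2⌋) for every α ≥ 0 and m ≥ 2. -/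
/-- The Hénon Morse index value `m + 2⌈α/2⌉ + 2·Σ_{i=1}^{m-1} ⌊((2+α)/4)θ_i⌋` strictly
exceeds the earlier lower bound `m + 2(m-1)(1 + ⌊α/2⌋)`. -/
theorem stmt14 (m : ℕ) (hm : 2 ≤ m) (α : ℝ) (hα : 0 ≤ α) (θ : ℕ → ℝ)
    (hbound : ∀ i : ℕ, 1 ≤ i → i ≤ m - 1 →
      8 * (i : ℝ) + 2 < θ i ∧ θ i < 8 * (i : ℝ) + 4) :
    (m : ℤ) + 2 * ⌈α / 2⌉ + 2 * ∑ i ∈ Finset.Icc 1 (m - 1), ⌊(2 + α) / 4 * θ i⌋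
      > (m : ℤ) + 2 * ((m : ℤ) - 1) * (1 + ⌊α / 2⌋) := by
  have hceil : (0 : ℤ) ≤ ⌈α / 2⌉ := Int.ceil_nonneg (by linarith)
  have key : ∀ i ∈ Finset.Icc 1 (m - 1), (2 : ℤ) + ⌊α / 2⌋ ≤ ⌊(2 + α) / 4 * θ i⌋ := by
    intro i hi
    rw [Finset.mem_Icc] at hi
    obtain ⟨h1, h2⟩ := hbound i hi.1 hi.2
    have hi1 : (1 : ℝ) ≤ (i : ℝ) := by exact_mod_cast hi.1
    have hle : α / 2 + ((4 * (i : ℤ) + 1 : ℤ) : ℝ) ≤ (2 + α) / 4 * θ i := by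
      push_cast
      nlinarith [mul_nonneg hα (sub_nonneg.2 hi1)]
    have := Int.floor_le_floor hle
    rw [Int.floor_add_intCast] at this
    have : ⌊α / 2⌋ + (4 * (i : ℤ) + 1) ≤ ⌊(2 + α) / 4 * θ i⌋ := this
    have hii : (1 : ℤ) ≤ (i : ℤ) := by exact_mod_cast hi.1
    omega
  have hsum : ((m - 1 : ℕ) : ℤ) * (2 + ⌊α / 2⌋) ≤
      ∑ i ∈ Finset.Icc 1 (m - 1), ⌊(2 + α) / 4 * θ i⌋ := by
    calc ((m - 1 : ℕ) : ℤ) * (2 + ⌊α / 2⌋)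
        = ∑ _i ∈ Finset.Icc 1 (m - 1), ((2 : ℤ) + ⌊α / 2⌋) := by
          rw [Finset.sum_const, Nat.card_Icc]
          simp [nsmul_eq_mul]
      _ ≤ _ := Finset.sum_le_sum key
  have hcast : ((m - 1 : ℕ) : ℤ) = (m : ℤ) - 1 := by omega
  rw [hcast] at hsum
  have hm1 : (1 : ℤ) ≤ (m : ℤ) - 1 := by omega
  nlinarith
end
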